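/- arXiv:2605.23603 — 3 statements merged into one kernel-verified Lean document; each statement's English description precedes it below -/
import Mathlib

section
/- Let α > β be real thresholds, u : ℕ → ℝ a sequence, and m an index such that u(m) ≥ u(j) for all j ≤ m (u(m) is a running maximum). Then R_{α,β}[u](m) = 1 if and only if u(m) ≥ α. Consequently, if w : ℕ → ℝ is another sequence with w(j) = u(j) for all m ≤ j ≤ n and w(m) ≥ w(j) for all j ≤ m, then R_{α,β}[u](n) = R_{α,β}[w](n) for every n ≥ m: the relay state after a running maximum depends only on the values from that maximum onward (the wiping property). -/
/-- The elementary relay `R_{α,β}` of Preisach hysteresis theory. -/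
noncomputable def relay (α β : ℝ) (u : ℕ → ℝ) : ℕ → ℝ
  | 0 => if u 0 ≥ α then 1 else 0
  | n + 1 => if u (n + 1) ≥ α then 1 else if u (n + 1) ≤ β then 0 else relay α β u n

/-!
The relay switches on exactly when the input reaches `α`, and it can only be on at time `m`
if the input reached `α` at some time `j ≤ m`. At a running maximum both conditions reduce to
`α ≤ u m`, so the state there is read off from `u m` alone; from then on the recursion only
consults the current input and the previous state.
-/

section

variable {α β : ℝ} {u w : ℕ → ℝ}

lemma relay_eq_one_of_le {k : ℕ} (h : α ≤ u k) : relay α β u k = 1 := by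
  cases k <;> simp [relay, h]

lemma relay_eq_zero_of_forall_lt : ∀ {k : ℕ}, (∀ j ≤ k, u j < α) → relay α β u k = 0
  | 0, h => by simp [relay, not_le.mpr (h 0 le_rfl)]
  | k + 1, h => by
    have hprev : relay α β u k = 0 :=
      relay_eq_zero_of_forall_lt fun j hj => h j (Nat.le_succ_of_le hj)
    simp [relay, not_le.mpr (h (k + 1) le_rfl), hprev]

lemma relay_of_forall_le {m : ℕ} (hmax : ∀ j ≤ m, u j ≤ u m) :
    relay α β u m = if α ≤ u m then 1 else 0 := by
  split_ifs with h
  · exact relay_eq_one_of_le h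
  · exact relay_eq_zero_of_forall_lt fun j hj => (hmax j hj).trans_lt (not_le.mp h)

lemma relay_congr {m n : ℕ} (hmn : m ≤ n) (hm : relay α β u m = relay α β w m)
    (hw : ∀ j, m < j → j ≤ n → w j = u j) : relay α β u n = relay α β w n := by
  induction n, hmn using Nat.le_induction with
  | base => exact hm
  | succ n hmn ih =>
    have hprev := ih fun j hj hjn => hw j hj (Nat.le_succ_of_le hjn)
    simp only [relay, hw (n + 1) (Nat.lt_succ_of_le hmn) le_rfl, hprev]

end

theorem relay_wiping_general (α β : ℝ) (u : ℕ → ℝ) (m : ℕ)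
    (hmax : ∀ j ≤ m, u j ≤ u m) :
    (relay α β u m = 1 ↔ u m ≥ α) ∧
      ∀ (w : ℕ → ℝ) (n : ℕ), m ≤ n →
        (∀ j, m ≤ j → j ≤ n → w j = u j) →
        (∀ j ≤ m, w j ≤ w m) →
        relay α β u n = relay α β w n := by
  refine ⟨?_, fun w n hmn hw hwmax => ?_⟩
  · rw [relay_of_forall_le hmax]
    split_ifs with h <;> simp [h]
  · have hm : relay α β u m = relay α β w m := by
      rw [relay_of_forall_le hmax, relay_of_forall_le hwmax, hw m le_rfl hmn]
    exact relay_congr hmn hm fun j hj hjn => hw j hj.le hjn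

/-- The wiping property: at a running maximum `m` the relay state is `1` iff `u m ≥ α`,
and consequently the relay state at any later time `n ≥ m` depends only on the values
of the input from the running maximum onward. -/
theorem relay_wiping (α β : ℝ) (hαβ : α > β) (u : ℕ → ℝ) (m : ℕ)
    (hmax : ∀ j ≤ m, u j ≤ u m) :
    (relay α β u m = 1 ↔ u m ≥ α) ∧
      ∀ (w : ℕ → ℝ) (n : ℕ), m ≤ n →
        (∀ j, m ≤ j → j ≤ n → w j = u j) →
        (∀ j ≤ m, w j ≤ w m) →
        relay α β u n = relay α β w n :=
  relay_wiping_general α β u m hmax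
end

section
/- Let δ > 0, L ≥ 1 an integer, and u : ℕ → ℝ a sequence whose values all lie in the grid {0, δ, 2δ, …, Lδ}. Then for every n, Σ_{j=1}^{L} δ · R_{jδ, −δ}[u](n) = max_{t ≤ n} u(t): a single-layer Preisach Attention Layer with L relays computes the historical (running) maximum of the input exactly. -/
/-!
Every relay `R_{jδ,-δ}` has its lower threshold below the grid, so it never switches off: it
reads `1` at time `n` exactly when the input has reached `jδ` by then, i.e. when `jδ` is at most
the running maximum `kδ`. Summing `δ` over the `k` relays that are on gives `kδ`.
-/

def runningMax {α : Type*} [LinearOrder α] (u : ℕ → α) (n : ℕ) : α :=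
  (Finset.range (n + 1)).sup' (Finset.nonempty_range_iff.mpr (Nat.succ_ne_zero n)) u

section RunningMax

variable {α : Type*} [LinearOrder α] (u : ℕ → α)

theorem runningMax_zero : runningMax u 0 = u 0 := by
  simp [runningMax]

theorem runningMax_succ (n : ℕ) : runningMax u (n + 1) = max (u (n + 1)) (runningMax u n) := by
  simp only [runningMax, Finset.range_add_one (n := n + 1)]
  exact Finset.sup'_insert _ u

theorem exists_le_eq_runningMax (n : ℕ) : ∃ t ≤ n, u t = runningMax u n := by
  obtain ⟨t, ht, hmax⟩ := Finset.exists_mem_eq_sup' _ u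
  exact ⟨t, Nat.lt_succ_iff.mp (Finset.mem_range.mp ht), hmax.symm⟩

end RunningMax

theorem relay_eq_ite_le_runningMax {α β : ℝ} {u : ℕ → ℝ} (hβ : ∀ t, β < u t) (n : ℕ) :
    relay α β u n = if α ≤ runningMax u n then 1 else 0 := by
  induction n with
  | zero => simp [relay, runningMax_zero]
  | succ n ih =>
    rw [relay, if_neg (hβ (n + 1)).not_ge, ih, runningMax_succ]
    by_cases h : α ≤ u (n + 1) <;> simp [h]

theorem sum_Icc_ite_le {M : Type*} [AddCommMonoid M] (c : M) {k L : ℕ} (hk : k ≤ L) :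
    ∑ j ∈ Finset.Icc 1 L, (if j ≤ k then c else 0) = k • c := by
  have hfilter : {j ∈ Finset.Icc 1 L | j ≤ k} = Finset.Icc 1 k := by
    ext j
    simp only [Finset.mem_filter, Finset.mem_Icc]
    omega
  rw [← Finset.sum_filter, hfilter, Finset.sum_const, Nat.card_Icc, Nat.add_sub_cancel]

theorem PAL_computes_running_max_general (δ : ℝ) (hδ : 0 < δ) (L : ℕ)
    (u : ℕ → ℝ) (hu : ∀ t, ∃ j ≤ L, u t = (j : ℝ) * δ) (n : ℕ) :
    ∑ j ∈ Finset.Icc 1 L, δ * relay ((j : ℝ) * δ) (-δ) u n =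
      (Finset.range (n + 1)).sup' (Finset.nonempty_range_iff.mpr (Nat.succ_ne_zero n)) u := by
  have above_threshold : ∀ t, -δ < u t := by
    intro t
    obtain ⟨j, -, hj⟩ := hu t
    rw [hj]
    linarith [mul_nonneg j.cast_nonneg hδ.le]
  obtain ⟨t₀, -, ht₀⟩ := exists_le_eq_runningMax u n
  obtain ⟨k, hkL, hk⟩ := hu t₀
  have hmax : runningMax u n = k * δ := ht₀ ▸ hk
  have relay_term : ∀ j : ℕ, δ * relay (j * δ) (-δ) u n = if j ≤ k then δ else 0 := by
    intro j
    rw [relay_eq_ite_le_runningMax above_threshold, hmax]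
    simp only [mul_le_mul_iff_left₀ hδ, Nat.cast_le, mul_ite, mul_one, mul_zero]
  change _ = runningMax u n
  rw [Finset.sum_congr rfl fun j _ => relay_term j, sum_Icc_ite_le δ hkL, hmax, nsmul_eq_mul]

/-- A single-layer Preisach Attention Layer with `L` relays computes the historical
(running) maximum of a grid-valued input exactly. -/
theorem PAL_computes_running_max (δ : ℝ) (hδ : 0 < δ) (L : ℕ) (hL : 1 ≤ L)
    (u : ℕ → ℝ) (hu : ∀ t, ∃ j ≤ L, u t = (j : ℝ) * δ) (n : ℕ) :
    ∑ j ∈ Finset.Icc 1 L, δ * relay ((j : ℝ) * δ) (-δ) u n =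
      (Finset.range (n + 1)).sup' (Finset.nonempty_range_iff.mpr (Nat.succ_ne_zero n)) u :=
  PAL_computes_running_max_general δ hδ L u hu n
end

section
/- Let ε be a real with 0 < 2ε < Δ. Then for all i, j ∈ {1, …, k} and all d with d+1 ≤ D_max, code(i, d+1) + ε < code(j, d) − ε: the PUSH signal emitted at depth d+1 (the code plus ε) stays strictly below even the lower emission (code minus ε) of any symbol at depth d, so pushing a new element never exceeds the current top-of-stack maximum and never triggers wiping. -/
/- Going one level deeper lowers a code by a whole block of `k + 1` steps of size `Δ`, while a
symbol index `j ≤ k` accounts for at most `k` steps; so `code(i, d + 1)` lies at least `Δ` below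
`code(j, d)`, which leaves room for the two `ε` perturbations once `2ε < Δ`. -/

/-- The Cantor-depth encoding of a symbol index `i` at stack depth `d`,
for alphabet size `k`, depth bound `Dmax` and resolution `Δ`:
`code(i, d) = Dmax·(k+1)·Δ − (d·(k+1) + i)·Δ`. -/
def code (k Dmax : ℕ) (Δ : ℝ) (i d : ℕ) : ℝ :=
  (Dmax : ℝ) * ((k : ℝ) + 1) * Δ - (((d : ℝ) * ((k : ℝ) + 1) + (i : ℝ)) * Δ)

section CodeGaps

variable {k Dmax : ℕ} {Δ : ℝ}

theorem code_sub_code_succ (i j d : ℕ) :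
    code k Dmax Δ j d - code k Dmax Δ i (d + 1) = ((k : ℝ) + 1 + i - j) * Δ := by
  unfold code
  push_cast
  ring

theorem le_code_sub_code_succ (hΔ : 0 ≤ Δ) (i : ℕ) {j : ℕ} (hj : j ≤ k) (d : ℕ) :
    Δ ≤ code k Dmax Δ j d - code k Dmax Δ i (d + 1) := by
  have hcoeff : (1 : ℝ) ≤ (k : ℝ) + 1 + i - j := by
    have : (j : ℝ) ≤ k := by exact_mod_cast hj
    linarith [(Nat.cast_nonneg i : (0 : ℝ) ≤ i)]
  rw [code_sub_code_succ]
  exact le_mul_of_one_le_left hΔ hcoeff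

end CodeGaps

theorem push_below_top_general (k Dmax : ℕ) (Δ ε : ℝ)
    (hε : 0 < 2 * ε) (hεΔ : 2 * ε < Δ)
    (i j : ℕ) (hj : 1 ≤ j ∧ j ≤ k)
    (d : ℕ) :
    code k Dmax Δ i (d + 1) + ε < code k Dmax Δ j d - ε := by
  have hgap := le_code_sub_code_succ (Dmax := Dmax) (by linarith : 0 ≤ Δ) i hj.2 d
  linarith

/-- With `0 < 2ε < Δ`, the PUSH signal `code(i, d+1) + ε` emitted at depth `d+1` stays
strictly below even the lower emission `code(j, d) − ε` of any symbol at depth `d`: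
pushing never exceeds the current top-of-stack maximum and never triggers wiping. -/
theorem push_below_top (k Dmax : ℕ) (hk : 1 ≤ k) (Δ ε : ℝ)
    (hε : 0 < 2 * ε) (hεΔ : 2 * ε < Δ)
    (i j : ℕ) (hi : 1 ≤ i ∧ i ≤ k) (hj : 1 ≤ j ∧ j ≤ k)
    (d : ℕ) (hd : d + 1 ≤ Dmax) :
    code k Dmax Δ i (d + 1) + ε < code k Dmax Δ j d - ε :=
  push_below_top_general k Dmax Δ ε hε hεΔ i j hj d
end
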